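/- The Cauchy transform of the Wigner semicircle distribution with variance σ² equals G(z) = 2/(z + √(z²-4σ²)) for z in the upper half-plane, where the square root branch is chosen so that √(z²-4σ²) ~ z as z → ∞. -/

import Mathlib

open MeasureTheory Complex Filter

/-!
Put `a = 2√v` and `p = (z - s z) / a`. Then `p⁻¹ = (z + s z) / a`, so `z = a (p + p⁻¹) / 2`,
and the substitution `x = a cos θ` followed by `w = e^{iθ}` turns the Cauchy transform into a
contour integral over the unit circle of a rational function with poles at `0`, `p` and `p⁻¹`.
The branch condition enters only to show `‖p‖ < 1`: on the connected upper half-plane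
`‖z - s z‖` never equals `a` (that would force `z` to be real), and it is smaller than `a` at
points `iy` where `s (iy) / (iy)` is close to `1`. The residues at `0` and `p` then add up to
`2p`, which gives `G(z) = p / √v = 2 / (z + s z)`.
-/

/-- The Wigner semicircle distribution with mean `0` and variance `v`, given by the
density `√(4v - x²)/(2πv)` on `[-2√v, 2√v]` (the density vanishes elsewhere since the
square root of a negative number is `0`). -/
noncomputable def semicircleMeasure (v : ℝ) : Measure ℝ :=
  MeasureTheory.volume.withDensity fun x =>
    ENNReal.ofReal (Real.sqrt (4 * v - x ^ 2) / (2 * Real.pi * v))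

open Set Metric
open scoped Real ComplexConjugate Topology

section
variable {E : Type*} [NormedAddCommGroup E] [NormedSpace ℝ E]

theorem integral_zero_two_pi_eq_two_smul_of_symm {f : ℝ → E}
    (hf : ∀ θ, f (2 * π - θ) = f θ) (hint : IntervalIntegrable f volume 0 π) :
    ∫ θ in (0)..2 * π, f θ = (2 : ℝ) • ∫ θ in (0)..π, f θ := by
  have hpi : 2 * π - π = π := by ring
  have hrefl : ∫ θ in π..2 * π, f θ = ∫ θ in (0)..π, f θ := by
    have h := intervalIntegral.integral_comp_sub_left f (a := 0) (b := π) (2 * π)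
    rw [sub_zero, hpi] at h
    simpa only [hf] using h.symm
  have hint' : IntervalIntegrable f volume π (2 * π) := by
    have h := hint.comp_sub_left (2 * π)
    rw [sub_zero, hpi] at h
    simpa only [hf] using h.symm
  rw [← intervalIntegral.integral_add_adjacent_intervals hint hint', hrefl, two_smul]

theorem integral_neg_self_eq_integral_sin_smul_comp_cos {a : ℝ} (ha : 0 ≤ a) (g : ℝ → E) :
    ∫ x in -a..a, g x = ∫ θ in (0)..π, (a * Real.sin θ) • g (a * Real.cos θ) := by
  have h := intervalIntegral.integral_deriv_smul_comp_of_deriv_nonpos (g := g) (a := 0) (b := π)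
    (f := fun θ ↦ a * Real.cos θ) (f' := fun θ ↦ -(a * Real.sin θ))
    (by fun_prop) (fun θ _ ↦ by simpa using (Real.hasDerivAt_cos θ).const_mul a)
    (fun θ hθ ↦ by
      rw [min_eq_left Real.pi_pos.le, max_eq_right Real.pi_pos.le] at hθ
      exact neg_nonpos.2 (mul_nonneg ha (Real.sin_nonneg_of_nonneg_of_le_pi hθ.1.le hθ.2.le)))
  simp only [Real.cos_zero, Real.cos_pi, mul_one, mul_neg_one, Function.comp_apply, neg_smul,
    intervalIntegral.integral_neg] at h
  rw [intervalIntegral.integral_symm, ← h, neg_neg]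

theorem integral_semicircleMeasure {v : ℝ} (hv : 0 ≤ v) (f : ℝ → E) :
    ∫ x, f x ∂semicircleMeasure v =
      ∫ x in -(2 * √v)..2 * √v, (√(4 * v - x ^ 2) / (2 * π * v)) • f x := by
  have hρ : ∀ x, 0 ≤ √(4 * v - x ^ 2) / (2 * π * v) := fun x ↦ by positivity
  have hsupp : ∀ x ∉ Icc (-(2 * √v)) (2 * √v),
      (√(4 * v - x ^ 2) / (2 * π * v)) • f x = 0 := by
    intro x hx
    rw [Real.sqrt_eq_zero'.2, zero_div, zero_smul]
    have h4v : 4 * v = (2 * √v) ^ 2 := by rw [mul_pow, Real.sq_sqrt hv]; norm_num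
    rw [h4v, sub_nonpos, sq_le_sq, abs_of_nonneg (by positivity), le_abs']
    simp only [mem_Icc, not_and_or, not_le] at hx
    rcases hx with hx | hx
    · exact Or.inl (by linarith)
    · exact Or.inr hx.le
  rw [semicircleMeasure, integral_withDensity_eq_integral_toReal_smul (by fun_prop)
      (.of_forall fun _ ↦ ENNReal.ofReal_lt_top),
    intervalIntegral.integral_of_le (neg_le_self (by positivity)), ← integral_Icc_eq_integral_Ioc,
    setIntegral_eq_integral_of_forall_compl_eq_zero hsupp]
  simp only [ENNReal.toReal_ofReal (hρ _)]

end

theorem norm_sub_ne_of_sq_eq {a : ℝ} (ha : a ≠ 0) {z w : ℂ} (hz : z.im ≠ 0)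
    (hw : w ^ 2 = z ^ 2 - a ^ 2) : ‖z - w‖ ≠ a := by
  intro h
  have hzw : z - w ≠ 0 := by
    rintro h0
    rw [h0, norm_zero] at h
    exact ha h.symm
  -- `(z - w) (z + w) = a² = (z - w) conj (z - w)` forces `z + w = conj (z - w)`.
  have hconj : z + w = conj (z - w) := by
    refine mul_left_cancel₀ hzw ?_
    rw [Complex.mul_conj, Complex.normSq_eq_norm_sq, h]
    push_cast
    linear_combination -hw
  have := congrArg Complex.im hconj
  simp only [add_im, conj_im, sub_im] at this
  exact hz (by linarith)

theorem IsPreconnected.norm_sub_lt_of_sq_eq {U : Set ℂ} (hU : IsPreconnected U)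
    (hUim : ∀ z ∈ U, z.im ≠ 0) {a : ℝ} {s : ℂ → ℂ} (hs : ContinuousOn s U)
    (hsq : ∀ z ∈ U, s z ^ 2 = z ^ 2 - a ^ 2) {z₀ : ℂ} (hz₀ : z₀ ∈ U)
    (h₀ : ‖z₀ - s z₀‖ < a) {z : ℂ} (hz : z ∈ U) : ‖z - s z‖ < a := by
  by_contra! h
  have ha : a ≠ 0 := (lt_of_le_of_lt (norm_nonneg _) h₀).ne'
  obtain ⟨x, hxU, hx⟩ :=
    hU.intermediate_value hz₀ hz (continuousOn_id.sub hs).norm ⟨h₀.le, h⟩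
  exact norm_sub_ne_of_sq_eq ha (hUim x hxU) (hsq x hxU) hx

theorem norm_mul_I_sub_lt {a y : ℝ} (ha : 0 < a) (hy : 0 < y) {w : ℂ}
    (hw : w ^ 2 = (y * I) ^ 2 - a ^ 2) (hre : 0 < (w / (y * I)).re) : ‖y * I - w‖ < a := by
  set t := w / (y * I)
  have hwt : w = y * I * t := by
    rw [mul_div_cancel₀ _ (mul_ne_zero (ofReal_ne_zero.2 hy.ne') I_ne_zero)]
  have ht2 : (y : ℂ) ^ 2 * t ^ 2 = y ^ 2 + a ^ 2 := by
    rw [hwt] at hw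
    linear_combination -hw + (y ^ 2 * t ^ 2 - y ^ 2) * I_sq
  -- `t ^ 2` is real and `t.re > 0`, so `t` is real
  have htim : t.im = 0 := by
    have := congrArg Complex.im ht2
    simp only [sq, mul_im, mul_re, ofReal_re, ofReal_im, add_im] at this
    have h0 : y * y * (2 * t.re) * t.im = 0 := by linarith
    exact (mul_eq_zero.1 h0).resolve_left (by positivity)
  have htre : y ^ 2 * t.re ^ 2 = y ^ 2 + a ^ 2 := by
    have := congrArg Complex.re ht2
    simp only [sq, mul_im, mul_re, ofReal_re, ofReal_im, add_re, htim] at this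
    linarith
  have hre1 : 1 ≤ t.re := by
    by_contra! h
    nlinarith [mul_pos (mul_pos (pow_pos hy 2) (sub_pos.2 h)) (by linarith : 0 < 1 + t.re)]
  have hdiff : y * I - w = ((y * (1 - t.re) : ℝ) : ℂ) * I := by
    have ht : t = t.re := Complex.ext rfl (by simp [htim])
    rw [hwt]
    conv_lhs => rw [ht]
    push_cast
    ring
  rw [hdiff, norm_mul, norm_I, mul_one, norm_real, Real.norm_eq_abs, abs_of_nonpos (by nlinarith)]
  nlinarith

theorem norm_sub_lt_of_tendsto_div {a : ℝ} (ha : 0 < a) {s : ℂ → ℂ}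
    (hs : ContinuousOn s {z : ℂ | 0 < z.im})
    (hsq : ∀ z : ℂ, 0 < z.im → s z ^ 2 = z ^ 2 - a ^ 2)
    (hasymp : Tendsto (fun y : ℝ ↦ s (y * I) / (y * I)) atTop (𝓝 1)) {z : ℂ}
    (hz : 0 < z.im) :
    ‖z - s z‖ < a := by
  obtain ⟨y, hre, hy⟩ := ((((continuous_re.tendsto 1).comp hasymp).eventually
    (lt_mem_nhds (by simp : (0 : ℝ) < (1 : ℂ).re))).and (eventually_gt_atTop 0)).exists
  have hyI : 0 < (y * I).im := by simpa using hy
  exact (convex_halfSpace_im_gt 0).isPreconnected.norm_sub_lt_of_sq_eq (fun w hw ↦ ne_of_gt hw)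
    hs hsq hyI (norm_mul_I_sub_lt ha hy (hsq _ hyI) hre) hz

theorem circleIntegral_sub_inv_of_notMem_closedBall {c w : ℂ} {R : ℝ} (hR : 0 ≤ R)
    (hw : w ∉ closedBall c R) : ∮ z in C(c, R), (z - w)⁻¹ = 0 := by
  refine DiffContOnCl.circleIntegral_eq_zero hR
    (DifferentiableOn.diffContOnCl_ball (U := {w}ᶜ) ?_ fun z hz hzw ↦ hw (hzw ▸ hz))
  exact fun z hz ↦
    ((differentiableAt_id.sub_const w).inv (sub_ne_zero.2 hz)).differentiableWithinAt

theorem sq_sub_one_sq_div_eq_partialFraction {p w : ℂ} (hp : p ≠ 0) (hw0 : w ≠ 0)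
    (hwp : w ≠ p) (hwq : w ≠ p⁻¹) :
    (w ^ 2 - 1) ^ 2 / (w ^ 2 * (w - p⁻¹) * (w - p)) =
      1 + (p⁻¹ + p) * (w - 0)⁻¹ + (w - 0) ^ (-2 : ℤ) + (p⁻¹ - p) * (w - p⁻¹)⁻¹
        + (p - p⁻¹) * (w - p)⁻¹ := by
  have h1 : w - p ≠ 0 := sub_ne_zero.2 hwp
  have h2 : w * p - 1 ≠ 0 := by
    rw [sub_ne_zero]; contrapose! hwq; exact eq_inv_of_mul_eq_one_left hwq
  have h3 : w - p⁻¹ = (w * p - 1) / p := by field_simp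
  rw [sub_zero, zpow_neg, zpow_two, h3]
  field_simp
  ring

theorem circleIntegrable_const_mul_sub_inv {u : ℂ} (hu : ‖u‖ ≠ 1) (c : ℂ) :
    CircleIntegrable (fun w ↦ c * (w - u)⁻¹) 0 1 :=
  (circleIntegrable_sub_inv_iff.2 (Or.inr (by simpa using hu))).const_mul c

theorem circleIntegral_sq_sub_one_sq_div {p : ℂ} (hp0 : p ≠ 0) (hp : ‖p‖ < 1) :
    ∮ w in C(0, 1), (w ^ 2 - 1) ^ 2 / (w ^ 2 * (w - p⁻¹) * (w - p)) =
      2 * π * I * (2 * p) := by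
  have hq : 1 < ‖p⁻¹‖ := by
    rw [norm_inv]; exact one_lt_inv_iff₀.2 ⟨norm_pos_iff.2 hp0, hp⟩
  have h0 : ‖(0 : ℂ)‖ ≠ 1 := by simp
  have hne : ∀ w ∈ sphere (0 : ℂ) 1, ∀ u : ℂ, ‖u‖ ≠ 1 → w ≠ u :=
    fun w hw u hu h ↦ hu (by simpa [h] using hw)
  have i1 : CircleIntegrable (fun _ ↦ (1 : ℂ)) 0 1 := circleIntegrable_const _ _ _
  have i2 := circleIntegrable_const_mul_sub_inv h0 (p⁻¹ + p)
  have i3 : CircleIntegrable (fun w : ℂ ↦ (w - 0) ^ (-2 : ℤ)) 0 1 :=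
    circleIntegrable_sub_zpow_iff.2 (Or.inr (Or.inr (by simp)))
  have i12 : CircleIntegrable (fun w ↦ 1 + (p⁻¹ + p) * (w - 0)⁻¹) 0 1 := i1.add i2
  have i123 : CircleIntegrable
      (fun w ↦ 1 + (p⁻¹ + p) * (w - 0)⁻¹ + (w - 0) ^ (-2 : ℤ)) 0 1 := i12.add i3
  have i1234 : CircleIntegrable (fun w ↦ 1 + (p⁻¹ + p) * (w - 0)⁻¹ + (w - 0) ^ (-2 : ℤ)
      + (p⁻¹ - p) * (w - p⁻¹)⁻¹) 0 1 :=
    i123.add (circleIntegrable_const_mul_sub_inv hq.ne' _)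
  have e1 : ∮ w in C(0, 1), (1 : ℂ) = 0 := by
    simpa using circleIntegral.integral_sub_zpow_of_ne (n := 0) (by decide) (0 : ℂ) 0 1
  rw [circleIntegral.integral_congr zero_le_one fun w hw ↦
      sq_sub_one_sq_div_eq_partialFraction hp0 (hne w hw 0 h0) (hne w hw p hp.ne)
        (hne w hw p⁻¹ hq.ne'),
    circleIntegral.integral_add i1234 (circleIntegrable_const_mul_sub_inv hp.ne _),
    circleIntegral.integral_add i123 (circleIntegrable_const_mul_sub_inv hq.ne' _),
    circleIntegral.integral_add i12 i3, circleIntegral.integral_add i1 i2]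
  simp only [circleIntegral.integral_const_mul, e1,
    circleIntegral.integral_sub_zpow_of_ne (by decide : (-2 : ℤ) ≠ -1),
    circleIntegral_sub_inv_of_notMem_closedBall (c := 0) (w := p⁻¹) zero_le_one
      (by simpa using hq.not_ge),
    circleIntegral.integral_sub_center_inv 0 one_ne_zero,
    circleIntegral.integral_sub_inv_of_mem_ball (mem_ball_zero_iff.2 hp)]
  ring

noncomputable def joukowski (p : ℂ) : ℂ := (p + p⁻¹) / 2

theorem joukowski_sub_joukowski {p w : ℂ} (hp : p ≠ 0) (hw : w ≠ 0) :
    joukowski p - joukowski w = -((w - p⁻¹) * (w - p)) / (2 * w) := by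
  unfold joukowski
  field_simp
  ring

theorem ofReal_cos_eq_joukowski_circleMap (θ : ℝ) :
    (Real.cos θ : ℂ) = joukowski (circleMap 0 1 θ) := by
  simp only [joukowski, circleMap, ofReal_one, one_mul, zero_add, ofReal_cos, Complex.cos,
    ← exp_neg]
  ring_nf

theorem ofReal_sin_eq_circleMap (θ : ℝ) :
    (Real.sin θ : ℂ) = (circleMap 0 1 θ - (circleMap 0 1 θ)⁻¹) / (2 * I) := by
  simp only [circleMap, ofReal_one, one_mul, zero_add, ofReal_sin, Complex.sin, ← exp_neg]
  field_simp
  ring_nf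
  simp

theorem circleMap_zero_one_sub_ne_zero {u : ℂ} (hu : ‖u‖ ≠ 1) (θ : ℝ) :
    circleMap 0 1 θ - u ≠ 0 :=
  sub_ne_zero.2 fun h ↦ hu (by simp [← h])

theorem joukowski_sub_cos_ne_zero {p : ℂ} (hp0 : p ≠ 0) (hp : ‖p‖ ≠ 1) (θ : ℝ) :
    joukowski p - Real.cos θ ≠ 0 := by
  have hq : ‖p⁻¹‖ ≠ 1 := by rwa [norm_inv, inv_ne_one]
  have hw0 : circleMap 0 1 θ ≠ 0 := circleMap_ne_center one_ne_zero
  rw [ofReal_cos_eq_joukowski_circleMap, joukowski_sub_joukowski hp0 hw0]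
  exact div_ne_zero (neg_ne_zero.2 (mul_ne_zero (circleMap_zero_one_sub_ne_zero hq θ)
    (circleMap_zero_one_sub_ne_zero hp θ))) (mul_ne_zero two_ne_zero hw0)

theorem sin_sq_div_joukowski_sub_cos_eq {p : ℂ} (hp0 : p ≠ 0) (hp : ‖p‖ ≠ 1) (θ : ℝ) :
    (Real.sin θ : ℂ) ^ 2 / (joukowski p - Real.cos θ) =
      deriv (circleMap 0 1) θ • ((2 * I)⁻¹ * ((circleMap 0 1 θ ^ 2 - 1) ^ 2 /
        (circleMap 0 1 θ ^ 2 * (circleMap 0 1 θ - p⁻¹) * (circleMap 0 1 θ - p)))) := by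
  have hq : ‖p⁻¹‖ ≠ 1 := by rwa [norm_inv, inv_ne_one]
  have hwq := circleMap_zero_one_sub_ne_zero hq θ
  have hwp := circleMap_zero_one_sub_ne_zero hp θ
  have hw0 : circleMap 0 1 θ ≠ 0 := circleMap_ne_center one_ne_zero
  rw [ofReal_sin_eq_circleMap, ofReal_cos_eq_joukowski_circleMap, joukowski_sub_joukowski hp0 hw0,
    deriv_circleMap, smul_eq_mul]
  field_simp
  ring_nf
  simp only [I_sq]
  ring

theorem integral_sin_sq_div_joukowski_sub_cos {p : ℂ} (hp0 : p ≠ 0) (hp : ‖p‖ < 1) :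
    ∫ θ in (0)..2 * π, (Real.sin θ : ℂ) ^ 2 / (joukowski p - Real.cos θ) = 2 * π * p := by
  rw [intervalIntegral.integral_congr fun θ _ ↦ sin_sq_div_joukowski_sub_cos_eq hp0 hp.ne θ]
  change ∮ w in C(0, 1), (2 * I)⁻¹ * ((w ^ 2 - 1) ^ 2 / (w ^ 2 * (w - p⁻¹) * (w - p))) = _
  rw [circleIntegral.integral_const_mul, circleIntegral_sq_sub_one_sq_div hp0 hp]
  field_simp

theorem integral_zero_pi_sin_sq_div_joukowski_sub_cos {p : ℂ} (hp0 : p ≠ 0) (hp : ‖p‖ < 1) :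
    ∫ θ in (0)..π, (Real.sin θ : ℂ) ^ 2 / (joukowski p - Real.cos θ) = π * p := by
  have hcont : Continuous fun θ : ℝ ↦ (Real.sin θ : ℂ) ^ 2 / (joukowski p - Real.cos θ) :=
    (by fun_prop : Continuous fun θ : ℝ ↦ (Real.sin θ : ℂ) ^ 2).div (by fun_prop)
      (joukowski_sub_cos_ne_zero hp0 hp.ne)
  have h := integral_sin_sq_div_joukowski_sub_cos hp0 hp
  rw [integral_zero_two_pi_eq_two_smul_of_symm
    (fun θ ↦ by simp [Real.sin_two_pi_sub, Real.cos_two_pi_sub])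
    (hcont.intervalIntegrable _ _)] at h
  rw [real_smul, ofReal_ofNat] at h
  linear_combination h / 2

theorem integral_sqrt_sq_sub_sq_div_joukowski_sub {a : ℝ} (ha : 0 < a) {p : ℂ} (hp0 : p ≠ 0)
    (hp : ‖p‖ < 1) :
    ∫ x in -a..a, (√(a ^ 2 - x ^ 2) : ℂ) / (a * joukowski p - x) = π * a * p := by
  rw [integral_neg_self_eq_integral_sin_smul_comp_cos ha.le,
    show (π : ℂ) * a * p = a * (π * p) by ring,
    ← integral_zero_pi_sin_sq_div_joukowski_sub_cos hp0 hp,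
    ← intervalIntegral.integral_const_mul]
  refine intervalIntegral.integral_congr fun θ hθ ↦ ?_
  rw [uIcc_of_le Real.pi_pos.le] at hθ
  have hsin : √(a ^ 2 - (a * Real.cos θ) ^ 2) = a * Real.sin θ := by
    rw [← Real.sqrt_sq (mul_nonneg ha.le (Real.sin_nonneg_of_nonneg_of_le_pi hθ.1 hθ.2)),
      mul_pow, mul_pow, Real.sin_sq]
    ring_nf
  have hne := joukowski_sub_cos_ne_zero hp0 hp.ne θ
  have ha0 : (a : ℂ) ≠ 0 := ofReal_ne_zero.2 ha.ne'
  simp only [hsin, real_smul]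
  push_cast
  field_simp

theorem mul_joukowski_div_eq {a z w : ℂ} (ha : a ≠ 0) (h : (z - w) * (z + w) = a ^ 2) :
    a * joukowski ((z - w) / a) = z := by
  have hzw : z - w ≠ 0 := left_ne_zero_of_mul (h ▸ pow_ne_zero 2 ha)
  simp only [joukowski]
  field_simp
  linear_combination -h

theorem integral_inv_sub_semicircleMeasure {v : ℝ} (hv : 0 < v) {p z : ℂ} (hp0 : p ≠ 0)
    (hp : ‖p‖ < 1) (hz : (2 * √v : ℝ) * joukowski p = z) :
    ∫ x : ℝ, (z - x)⁻¹ ∂semicircleMeasure v = p / √v := by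
  set a := 2 * √v
  have ha : 0 < a := by positivity
  have ha2 : 4 * v = a ^ 2 := by rw [mul_pow, Real.sq_sqrt hv.le]; norm_num
  have hv0 : (v : ℂ) ≠ 0 := ofReal_ne_zero.2 hv.ne'
  rw [integral_semicircleMeasure hv.le]
  calc ∫ x in -a..a, (√(4 * v - x ^ 2) / (2 * π * v)) • (z - x)⁻¹
      = (2 * π * v : ℂ)⁻¹ *
          ∫ x in -a..a, (√(a ^ 2 - x ^ 2) : ℂ) / (a * joukowski p - x) := by
        rw [← intervalIntegral.integral_const_mul, ha2, hz]
        refine intervalIntegral.integral_congr fun x _ ↦ ?_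
        simp only [real_smul]
        push_cast
        ring
    _ = p / √v := by
        have hsqrt : (√v : ℂ) ^ 2 = v := by rw [← ofReal_pow, Real.sq_sqrt hv.le]
        have hsqrt0 : (√v : ℂ) ≠ 0 := ofReal_ne_zero.2 (Real.sqrt_pos.2 hv).ne'
        have hπ : (π : ℂ) ≠ 0 := ofReal_ne_zero.2 Real.pi_ne_zero
        rw [integral_sqrt_sq_sub_sq_div_joukowski_sub ha hp0 hp]
        simp only [a]
        push_cast
        field_simp
        linear_combination hsqrt

/-- The Cauchy transform of the Wigner semicircle distribution with variance `v = σ²`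
equals `2/(z + √(z² - 4v))` on the upper half-plane, where `s z = √(z² - 4v)` is the
holomorphic branch of the square root with `s z ~ z` as `z → ∞`. -/
theorem semicircle_cauchy_transform (v : ℝ) (hv : 0 < v) (s : ℂ → ℂ)
    (hs : DifferentiableOn ℂ s {z : ℂ | 0 < z.im})
    (hsq : ∀ z : ℂ, 0 < z.im → s z ^ 2 = z ^ 2 - 4 * v)
    (hasymp : Tendsto (fun y : ℝ => s (y * Complex.I) / (y * Complex.I)) atTop (nhds 1)) :
    ∀ z : ℂ, 0 < z.im →
      ∫ x : ℝ, (z - (x : ℂ))⁻¹ ∂(semicircleMeasure v) = 2 / (z + s z) := by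
  intro z hz
  set a := 2 * √v
  have ha : 0 < a := by positivity
  have ha2 : (a : ℂ) ^ 2 = 4 * v := by
    rw [← ofReal_pow, mul_pow, Real.sq_sqrt hv.le]; push_cast; ring
  have hsq' : ∀ z : ℂ, 0 < z.im → s z ^ 2 = z ^ 2 - (a : ℂ) ^ 2 := by rwa [ha2]
  have hroots : (z - s z) * (z + s z) = (a : ℂ) ^ 2 := by linear_combination -hsq' z hz
  have hroots0 : (z - s z) * (z + s z) ≠ 0 := hroots ▸ pow_ne_zero 2 (ofReal_ne_zero.2 ha.ne')
  have hp0 : (z - s z) / a ≠ 0 :=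
    div_ne_zero (left_ne_zero_of_mul hroots0) (ofReal_ne_zero.2 ha.ne')
  have hp : ‖(z - s z) / a‖ < 1 := by
    rw [norm_div, norm_real, Real.norm_of_nonneg ha.le, div_lt_one ha]
    exact norm_sub_lt_of_tendsto_div ha hs.continuousOn hsq' hasymp hz
  rw [integral_inv_sub_semicircleMeasure hv hp0 hp
    (mul_joukowski_div_eq (ofReal_ne_zero.2 ha.ne') hroots), div_div,
    eq_div_iff (right_ne_zero_of_mul hroots0), div_mul_eq_mul_div, hroots]
  have hsqrt0 : (√v : ℂ) ≠ 0 := ofReal_ne_zero.2 (Real.sqrt_pos.2 hv).ne'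
  field_simp
  simp only [a]
  push_cast
  ring
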